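/- Let q, d ≥ 2 be integers, let ψ be a nonzero integer, and let θ, x be integers. Then the density δ(q, d; 0, ψ, 0, θ, x) exists, and it equals gcd(ψ, θ, d)/d if gcd(ψ, θ, d) divides gcd(x, d), and equals 0 otherwise. In other words, the limit lim_{N→∞} (1/N)·|{n < N : ψ·w_q(n) + θ·n + x ≡ 0 (mod d)}| exists and equals gcd(ψ, θ, d)/d when gcd(ψ, θ, d) ∣ gcd(x, d), and 0 otherwise. -/

import Mathlib

open Filter

/-- `vq q n` is the `q`-adic valuation: `0` if `n = 0`, and otherwise the
largest `k` such that `q ^ k` divides `n`. -/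
noncomputable def vq (q n : ℕ) : ℕ := if n = 0 then 0 else sSup {k : ℕ | q ^ k ∣ n}

/-- `wq q n = ∑_{i=0}^n vq q i`. -/
noncomputable def wq (q n : ℕ) : ℕ := ∑ i ∈ Finset.range (n + 1), vq q i

/-!
Write `n = q * m + r` with `r < q`; then `w(n) = m + w(m)`. Hence the exponential sum
`S(α, β; N) = ∑_{n<N} e((α w(n) + β n) / d)` satisfies `S(α, β; qM) = G(β) S(α, α + qβ; M)`,
where `G(β) = ∑_{r<q} e(β r / d)` has `|G(β)| < q` unless `d ∣ β`. If `d ∤ α`, one of `β` and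
`α + qβ` is nonzero mod `d`, so every two steps of this recursion gain a factor `ρ / q < 1`,
with `ρ = max_{d ∤ β} |G(β)|`, and `S = o(N)`; if `d ∣ α` but `d ∤ β`, `S` is a bounded
geometric sum. By orthogonality of characters this makes `ψ w(n) + θ n` equidistributed mod `d`
when `gcd(ψ, θ, d) = 1`. The general case reduces to this one after dividing `ψ`, `θ`, `x` and
`d` by `g = gcd(ψ, θ, d)`; if `g ∤ x`, no `n` qualifies.
-/

open Finset Topology

section Valuation

variable {q : ℕ}

lemma vq_eq_padicValNat (hq : q ≠ 1) (n : ℕ) : vq q n = padicValNat q n := by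
  rcases eq_or_ne n 0 with rfl | hn
  · simp [vq]
  have hset : {k : ℕ | q ^ k ∣ n} = Set.Iic (padicValNat q n) :=
    Set.ext fun _ => Nat.pow_dvd_iff_le_padicValNat hq hn
  rw [vq, if_neg hn, hset, csSup_Iic]

lemma wq_succ (q n : ℕ) : wq q (n + 1) = wq q n + vq q (n + 1) :=
  sum_range_succ _ _

lemma wq_eq_div_add_wq_div (hq : 1 < q) (n : ℕ) : wq q n = n / q + wq q (n / q) := by
  induction n with
  | zero => simp [wq, vq]
  | succ n ih =>
    rw [wq_succ, ih, vq_eq_padicValNat hq.ne']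
    by_cases h : q ∣ n + 1
    · obtain ⟨m, hm⟩ := h
      have hm' : n / q + 1 = m := by
        rw [← Nat.succ_div_of_dvd ⟨m, hm⟩, hm, Nat.mul_div_cancel_left _ (by omega)]
      rw [Nat.succ_div_of_dvd ⟨m, hm⟩, wq_succ, vq_eq_padicValNat hq.ne', hm', hm,
        padicValNat_base_mul hq (by rintro rfl; simp at hm)]
      omega
    · rw [Nat.succ_div_of_not_dvd h, padicValNat.eq_zero_of_not_dvd h, add_zero]

lemma wq_mul_add (hq : 1 < q) (m : ℕ) {r : ℕ} (hr : r < q) :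
    wq q (q * m + r) = m + wq q m := by
  have : (q * m + r) / q = m := by
    rw [Nat.mul_add_div (by omega), Nat.div_eq_of_lt hr, add_zero]
  rw [wq_eq_div_add_wq_div hq, this]

end Valuation

lemma norm_geom_sum_lt {z : ℂ} (hz : ‖z‖ = 1) (hz1 : z ≠ 1) {n : ℕ} (hn : 2 ≤ n) :
    ‖∑ i ∈ range n, z ^ i‖ < n := by
  obtain ⟨m, rfl⟩ := Nat.exists_eq_add_of_le hn
  have h1z : ‖1 + z‖ < 2 := by
    have : ¬SameRay ℝ 1 z := by
      rw [sameRay_iff_of_norm_eq (by simp [hz])]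
      exact Ne.symm hz1
    simpa [hz, one_add_one_eq_two] using norm_add_lt_of_not_sameRay this
  calc ‖∑ i ∈ range (2 + m), z ^ i‖ = ‖(1 + z) + ∑ i ∈ range m, z ^ (2 + i)‖ := by
        simp [sum_range_add, sum_range_succ]
    _ ≤ ‖1 + z‖ + ∑ i ∈ range m, ‖z ^ (2 + i)‖ :=
        (norm_add_le _ _).trans (by gcongr; exact norm_sum_le _ _)
    _ < 2 + m := by simpa [hz] using h1z
    _ = ↑(2 + m) := by push_cast; rfl

lemma norm_geom_sum_le {z : ℂ} (hz : ‖z‖ = 1) (hz1 : z ≠ 1) (n : ℕ) :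
    ‖∑ i ∈ range n, z ^ i‖ ≤ 2 / ‖z - 1‖ := by
  rw [geom_sum_eq hz1, norm_div]
  gcongr
  calc ‖z ^ n - 1‖ ≤ ‖z ^ n‖ + ‖(1 : ℂ)‖ := norm_sub_le _ _
    _ = 2 := by rw [norm_pow, hz]; norm_num

lemma exists_le_pow_mul_add_of_le_mul_div_add {ι : Type*} {F : ι → ℕ → ℝ} {T : ι → ι} {k : ℕ}
    {c C : ℝ} (hc : 0 ≤ c) (hk : 0 < k) (hFN : ∀ i N, F i N ≤ N)
    (hF : ∀ i N, F i N ≤ c * F (T i) (N / k) + C) (j : ℕ) :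
    ∃ C' : ℝ, ∀ i N, F i N ≤ (c / k) ^ j * N + C' := by
  induction j with
  | zero => exact ⟨0, by simpa using hFN⟩
  | succ j ih =>
    obtain ⟨C', hC'⟩ := ih
    refine ⟨c * C' + C, fun i N => ?_⟩
    have hk' : (k : ℝ) ≠ 0 := by positivity
    calc F i N ≤ c * F (T i) (N / k) + C := hF i N
      _ ≤ c * ((c / k) ^ j * ((N / k : ℕ) : ℝ) + C') + C := by gcongr; exact hC' _ _
      _ ≤ c * ((c / k) ^ j * (N / k) + C') + C := by gcongr; exact Nat.cast_div_le
      _ = (c / k) ^ (j + 1) * N + (c * C' + C) := by rw [pow_succ]; field_simp; ring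

lemma tendsto_div_of_le_mul_div_add {ι : Type*} {F : ι → ℕ → ℝ} {T : ι → ι} {k : ℕ}
    {c C : ℝ} (hc : 0 ≤ c) (hck : c < k) (hF0 : ∀ i N, 0 ≤ F i N) (hFN : ∀ i N, F i N ≤ N)
    (hF : ∀ i N, F i N ≤ c * F (T i) (N / k) + C) (i : ι) :
    Tendsto (fun N => F i N / N) atTop (𝓝 0) := by
  have hk : (0 : ℝ) < k := hc.trans_lt hck
  refine tendsto_order.2
    ⟨fun a ha => .of_forall fun N => ha.trans_le (by have := hF0 i N; positivity), fun ε hε => ?_⟩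
  obtain ⟨j, hj⟩ := exists_pow_lt_of_lt_one (half_pos hε) ((div_lt_one hk).2 hck)
  obtain ⟨C', hC'⟩ := exists_le_pow_mul_add_of_le_mul_div_add hc (by exact_mod_cast hk) hFN hF j
  have hC'N := (tendsto_const_div_atTop_nhds_zero_nat C').eventually (gt_mem_nhds (half_pos hε))
  filter_upwards [hC'N, eventually_gt_atTop 0] with N hC'N hN
  have hN' : (0 : ℝ) < N := by exact_mod_cast hN
  calc F i N / N ≤ ((c / k) ^ j * N + C') / N := by gcongr; exact hC' i N
    _ = (c / k) ^ j + C' / N := by field_simp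
    _ < ε := by linarith

lemma ZMod.eq_zero_of_mul_eq_zero_of_gcd_eq_one {d : ℕ} {ψ θ : ℤ}
    (hcop : Int.gcd ψ (Int.gcd θ d) = 1) {a : ZMod d} (hψ : a * ψ = 0) (hθ : a * θ = 0) :
    a = 0 := by
  obtain ⟨u, v, huv⟩ := Int.isCoprime_iff_gcd_eq_one.2 hcop
  have h1 : ((u * ψ + v * (θ * θ.gcdA d + d * θ.gcdB d) : ℤ) : ZMod d) = 1 := by
    rw [← Int.gcd_eq_gcd_ab, huv, Int.cast_one]
  calc a = a * ((u * ψ + v * (θ * θ.gcdA d + d * θ.gcdB d) : ℤ) : ZMod d) := by rw [h1, mul_one]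
    _ = u * (a * ψ) + v * θ.gcdA d * (a * θ) := by push_cast [ZMod.natCast_self]; ring
    _ = 0 := by rw [hψ, hθ]; ring

section ExpSum

open ZMod (stdAddChar)

variable {d : ℕ} [NeZero d] (q : ℕ)

lemma stdAddChar_eq_one_iff {a : ZMod d} : stdAddChar a = 1 ↔ a = 0 := by
  rw [← AddChar.map_zero_eq_one (stdAddChar (N := d)), ZMod.injective_stdAddChar.eq_iff]

lemma sum_stdAddChar_mul (t : ZMod d) :
    ∑ a : ZMod d, stdAddChar (a * t) = if t = 0 then (d : ℂ) else 0 := by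
  rw [AddChar.sum_mulShift t (ZMod.isPrimitive_stdAddChar d), ZMod.card]
  split_ifs <;> simp

lemma stdAddChar_mul_natCast (β : ZMod d) (n : ℕ) :
    stdAddChar (β * (n : ZMod d)) = stdAddChar β ^ n := by
  rw [mul_comm, ← nsmul_eq_mul, AddChar.map_nsmul_eq_pow]

noncomputable def expSum (α β : ZMod d) (N : ℕ) : ℂ :=
  ∑ n ∈ range N, stdAddChar (α * (wq q n : ZMod d) + β * (n : ZMod d))

lemma expSum_succ (α β : ZMod d) (N : ℕ) :
    expSum q α β (N + 1)
      = expSum q α β N + stdAddChar (α * (wq q N : ZMod d) + β * (N : ZMod d)) :=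
  sum_range_succ _ _

noncomputable def blockSum (β : ZMod d) : ℂ :=
  ∑ r ∈ range q, stdAddChar (β * (r : ZMod d))

lemma norm_blockSum_le (β : ZMod d) : ‖blockSum q β‖ ≤ q :=
  (norm_sum_le _ _).trans (by simp)

lemma norm_blockSum_lt (hq : 1 < q) {β : ZMod d} (hβ : β ≠ 0) : ‖blockSum q β‖ < q := by
  simp only [blockSum, stdAddChar_mul_natCast]
  exact norm_geom_sum_lt (by simp) (stdAddChar_eq_one_iff.not.2 hβ) hq

lemma exists_norm_blockSum_le (hq : 1 < q) :
    ∃ ρ : ℝ, 0 ≤ ρ ∧ ρ < q ∧ ∀ β : ZMod d, β ≠ 0 → ‖blockSum q β‖ ≤ ρ := by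
  obtain ⟨β₀, hβ₀⟩ :=
    Finite.exists_max fun β : ZMod d => if β = 0 then 0 else ‖blockSum q β‖
  refine ⟨_, ?_, ?_, fun β hβ => (if_neg hβ).symm.le.trans (hβ₀ β)⟩
  · split_ifs <;> positivity
  · split_ifs with h
    · positivity
    · exact norm_blockSum_lt q hq h

lemma expSum_mul (hq : 1 < q) (α β : ZMod d) (M : ℕ) :
    expSum q α β (q * M) = blockSum q β * expSum q α (α + q * β) M := by
  induction M with
  | zero => simp [expSum]
  | succ M ih =>
    rw [Nat.mul_succ, expSum, sum_range_add, ← expSum, ih, expSum_succ, mul_add]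
    congr 1
    rw [blockSum, sum_mul]
    refine sum_congr rfl fun r hr => ?_
    rw [← AddChar.map_add_eq_mul, wq_mul_add hq M (mem_range.1 hr)]
    congr 1
    push_cast
    ring

lemma norm_expSum_add_sub_le (α β : ZMod d) (M k : ℕ) :
    ‖expSum q α β (M + k) - expSum q α β M‖ ≤ k := by
  rw [expSum, sum_range_add, ← expSum, add_sub_cancel_left]
  exact (norm_sum_le _ _).trans (by simp)

lemma norm_expSum_le (α β : ZMod d) (N : ℕ) : ‖expSum q α β N‖ ≤ N := by
  simpa [expSum] using norm_expSum_add_sub_le q α β 0 N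

lemma norm_expSum_le_norm_blockSum_mul (hq : 1 < q) (α β : ZMod d) (N : ℕ) :
    ‖expSum q α β N‖ ≤ ‖blockSum q β‖ * ‖expSum q α (α + q * β) (N / q)‖ + q := by
  have h := norm_expSum_add_sub_le q α β (q * (N / q)) (N % q)
  rw [Nat.div_add_mod, expSum_mul q hq] at h
  calc ‖expSum q α β N‖
      ≤ ‖blockSum q β * expSum q α (α + q * β) (N / q)‖
        + ‖expSum q α β N - blockSum q β * expSum q α (α + q * β) (N / q)‖ :=
        norm_le_insert' _ _
    _ ≤ ‖blockSum q β‖ * ‖expSum q α (α + q * β) (N / q)‖ + q := by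
      rw [norm_mul]
      gcongr
      exact h.trans (by exact_mod_cast (Nat.mod_lt N (by omega)).le)

lemma norm_expSum_le_mul_norm_expSum_div_mul_self (hq : 1 < q) {ρ : ℝ}
    (hρ : ∀ β : ZMod d, β ≠ 0 → ‖blockSum q β‖ ≤ ρ) {α : ZMod d} (hα : α ≠ 0) (β : ZMod d)
    (N : ℕ) :
    ‖expSum q α β N‖
      ≤ q * ρ * ‖expSum q α (α + q * (α + q * β)) (N / (q * q))‖ + (q * q + q) := by
  have hG : ‖blockSum q β‖ * ‖blockSum q (α + (q : ZMod d) * β)‖ ≤ q * ρ := by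
    rcases eq_or_ne β 0 with rfl | hβ
    · have : ‖blockSum q (0 : ZMod d)‖ = q := by simp [blockSum]
      rw [this, mul_zero, add_zero]
      gcongr
      exact hρ α hα
    · rw [mul_comm (q : ℝ)]
      exact mul_le_mul (hρ β hβ) (norm_blockSum_le q _) (norm_nonneg _)
        ((norm_nonneg _).trans (hρ β hβ))
  have h₁ := norm_expSum_le_norm_blockSum_mul q hq α β N
  have h₂ := norm_expSum_le_norm_blockSum_mul q hq α (α + q * β) (N / q)
  rw [Nat.div_div_eq_div_mul] at h₂
  have hS := norm_nonneg (expSum q α (α + q * (α + q * β)) (N / (q * q)))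
  calc ‖expSum q α β N‖
      ≤ ‖blockSum q β‖ * (‖blockSum q (α + (q : ZMod d) * β)‖
          * ‖expSum q α (α + q * (α + q * β)) (N / (q * q))‖ + q) + q := by
        refine h₁.trans ?_
        gcongr
    _ ≤ q * ρ * ‖expSum q α (α + q * (α + q * β)) (N / (q * q))‖ + (q * q + q) := by
        have h₃ := mul_le_mul_of_nonneg_right hG hS
        have h₄ := mul_le_mul_of_nonneg_right (norm_blockSum_le q β) (Nat.cast_nonneg q)
        linarith

lemma tendsto_expSum_div_of_left_ne_zero (hq : 1 < q) {α : ZMod d} (hα : α ≠ 0) (β : ZMod d) :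
    Tendsto (fun N : ℕ => expSum q α β N / N) atTop (𝓝 0) := by
  obtain ⟨ρ, hρ0, hρq, hρ⟩ := exists_norm_blockSum_le (d := d) q hq
  rw [tendsto_zero_iff_norm_tendsto_zero]
  simp only [norm_div, Complex.norm_natCast]
  refine tendsto_div_of_le_mul_div_add (T := fun β => α + q * (α + q * β)) (k := q * q)
    (by positivity) ?_ (fun _ _ => norm_nonneg _) (norm_expSum_le q α)
    (norm_expSum_le_mul_norm_expSum_div_mul_self q hq hρ hα) β
  push_cast
  exact mul_lt_mul_of_pos_left hρq (by positivity)

lemma tendsto_expSum_zero_div_of_ne_zero {β : ZMod d} (hβ : β ≠ 0) :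
    Tendsto (fun N : ℕ => expSum q 0 β N / N) atTop (𝓝 0) := by
  set z := stdAddChar β
  have hz1 : z ≠ 1 := stdAddChar_eq_one_iff.not.2 hβ
  have hgeom : ∀ N, expSum q 0 β N = ∑ n ∈ range N, z ^ n := fun N => by
    simp [expSum, stdAddChar_mul_natCast, z]
  rw [tendsto_zero_iff_norm_tendsto_zero]
  refine squeeze_zero (fun _ => norm_nonneg _) (fun N => ?_)
    (tendsto_const_div_atTop_nhds_zero_nat (2 / ‖z - 1‖))
  rw [norm_div, Complex.norm_natCast, hgeom]
  gcongr
  exact norm_geom_sum_le (by simp [z]) hz1 N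

lemma tendsto_expSum_div (hq : 1 < q) (α β : ZMod d) :
    Tendsto (fun N : ℕ => expSum q α β N / N) atTop (𝓝 (if α = 0 ∧ β = 0 then 1 else 0)) := by
  split_ifs with h
  · obtain ⟨rfl, rfl⟩ := h
    refine tendsto_const_nhds.congr' ?_
    filter_upwards [eventually_ne_atTop 0] with N hN
    simp [expSum, hN]
  · rcases eq_or_ne α 0 with rfl | hα
    · exact tendsto_expSum_zero_div_of_ne_zero q (by tauto)
    · exact tendsto_expSum_div_of_left_ne_zero q hq hα β

lemma natCast_mul_card_filter_eq_sum (ψ θ x : ZMod d) (N : ℕ) :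
    (d : ℂ) * #{n ∈ range N | ψ * wq q n + θ * n + x = 0}
      = ∑ a : ZMod d, stdAddChar (a * x) * expSum q (a * ψ) (a * θ) N := by
  simp_rw [expSum, mul_sum, ← AddChar.map_add_eq_mul]
  rw [sum_comm, card_filter, Nat.cast_sum, mul_sum]
  refine sum_congr rfl fun n _ => ?_
  have hlin : ∀ a : ZMod d,
      a * x + (a * ψ * wq q n + a * θ * n) = a * (ψ * wq q n + θ * n + x) := fun a => by ring
  simp_rw [hlin, sum_stdAddChar_mul]
  split_ifs <;> simp

theorem tendsto_card_filter_dvd_div_of_gcd_eq_one (hq : 1 < q) {ψ θ : ℤ}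
    (hcop : Int.gcd ψ (Int.gcd θ d) = 1) (x : ℤ) :
    Tendsto (fun N : ℕ => (#{n ∈ range N | (d : ℤ) ∣ ψ * wq q n + θ * n + x} : ℝ) / N)
      atTop (𝓝 (1 / d)) := by
  have hfilter : ∀ N, #{n ∈ range N | (d : ℤ) ∣ ψ * wq q n + θ * n + x}
      = #{n ∈ range N | (ψ : ZMod d) * wq q n + θ * n + x = 0} := fun N => by
    congr 1
    refine filter_congr fun n _ => ?_
    rw [← ZMod.intCast_zmod_eq_zero_iff_dvd]
    push_cast
    rfl
  have hlim := (tendsto_finsetSum (univ : Finset (ZMod d)) fun a _ =>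
    (tendsto_expSum_div q hq (a * (ψ : ZMod d)) (a * (θ : ZMod d))).const_mul
      (stdAddChar (a * (x : ZMod d)))).const_mul (1 / d : ℂ)
  have hval : (1 / d : ℂ) * ∑ a : ZMod d, stdAddChar (a * (x : ZMod d)) *
        (if a * (ψ : ZMod d) = 0 ∧ a * (θ : ZMod d) = 0 then 1 else 0)
      = ((1 / d : ℝ) : ℂ) := by
    rw [sum_eq_single 0 (fun a _ ha => by
      rw [if_neg fun h => ha (ZMod.eq_zero_of_mul_eq_zero_of_gcd_eq_one hcop h.1 h.2), mul_zero])
      (by simp)]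
    simp
  rw [hval] at hlim
  rw [← tendsto_ofReal_iff]
  refine hlim.congr fun N => ?_
  rw [hfilter]
  simp_rw [mul_div_assoc', ← sum_div, ← natCast_mul_card_filter_eq_sum]
  push_cast
  rw [one_div, ← mul_div_assoc, inv_mul_cancel_left₀ (NeZero.ne (d : ℂ))]

theorem tendsto_card_filter_dvd_div_of_gcd_dvd (hq : 1 < q) (ψ θ x : ℤ)
    (hx : (Int.gcd ψ (Int.gcd θ d) : ℤ) ∣ x) :
    Tendsto (fun N : ℕ => (#{n ∈ range N | (d : ℤ) ∣ ψ * wq q n + θ * n + x} : ℝ) / N)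
      atTop (𝓝 ((Int.gcd ψ (Int.gcd θ d) : ℝ) / d)) := by
  set g := Int.gcd ψ (Int.gcd θ d) with hg
  have hg0 : g ≠ 0 := (Int.gcd_pos_of_ne_zero_right _ (Int.natCast_ne_zero.2
    (Int.gcd_pos_of_ne_zero_right _ (Int.natCast_ne_zero.2 (NeZero.ne d))).ne')).ne'
  obtain ⟨ψ', hψ'⟩ : (g : ℤ) ∣ ψ := Int.gcd_dvd_left _ _
  obtain ⟨θ', hθ'⟩ : (g : ℤ) ∣ θ := (Int.gcd_dvd_right _ _).trans (Int.gcd_dvd_left _ _)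
  obtain ⟨d', hd'⟩ : g ∣ d :=
    Int.natCast_dvd_natCast.1 ((Int.gcd_dvd_right _ _).trans (Int.gcd_dvd_right _ _))
  obtain ⟨x', hx'⟩ := hx
  have : NeZero d' := ⟨by rintro rfl; exact NeZero.ne d (by simpa using hd')⟩
  have hcop : Int.gcd ψ' (Int.gcd θ' d') = 1 := by
    refine (Nat.mul_eq_left hg0).1 ?_
    conv_rhs => rw [hg, hψ', hθ', hd', Nat.cast_mul, Int.gcd_mul_left, Int.natAbs_natCast,
      Nat.cast_mul, Int.gcd_mul_left, Int.natAbs_natCast]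
  have hfilter : ∀ n : ℕ,
      (d : ℤ) ∣ ψ * wq q n + θ * n + x ↔ (d' : ℤ) ∣ ψ' * wq q n + θ' * n + x' := by
    intro n
    rw [hψ', hθ', hx', hd', Nat.cast_mul, show (g : ℤ) * ψ' * wq q n + g * θ' * n + g * x'
      = g * (ψ' * wq q n + θ' * n + x') by ring, Int.mul_dvd_mul_iff_left (by exact_mod_cast hg0)]
  have hlimit : (g : ℝ) / d = 1 / d' := by
    rw [hd', Nat.cast_mul, div_mul_cancel_left₀ (by exact_mod_cast hg0), one_div]
  simp_rw [hfilter, hlimit]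
  exact tendsto_card_filter_dvd_div_of_gcd_eq_one q hq hcop x'

end ExpSum

theorem stmt_10_general (q d : ℕ) (hq : 2 ≤ q) (hd : 2 ≤ d) (ψ θ x : ℤ) :
    Tendsto
      (fun N : ℕ =>
        (((Finset.range N).filter fun n =>
            (ψ * wq q n + θ * n + x) % (d : ℤ) = 0).card : ℝ) / N)
      atTop
      (nhds (if Int.gcd ψ (Int.gcd θ (d : ℤ)) ∣ Int.gcd x (d : ℤ) then
        (Int.gcd ψ (Int.gcd θ (d : ℤ)) : ℝ) / d else 0)) := by
  have : NeZero d := ⟨by omega⟩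
  simp_rw [← Int.dvd_iff_emod_eq_zero]
  have hgd : (Int.gcd ψ (Int.gcd θ d) : ℤ) ∣ d :=
    (Int.gcd_dvd_right _ _).trans (Int.gcd_dvd_right _ _)
  split_ifs with hx
  · exact tendsto_card_filter_dvd_div_of_gcd_dvd q hq ψ θ x
      ((Int.natCast_dvd_natCast.2 hx).trans (Int.gcd_dvd_left _ _))
  · refine tendsto_const_nhds.congr fun N => ?_
    rw [filter_false_of_mem, card_empty, Nat.cast_zero, zero_div]
    intro n _ hn
    refine hx (Int.dvd_gcd ((dvd_add_right ?_).1 (hgd.trans hn)) hgd)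
    exact dvd_add ((Int.gcd_dvd_left _ _).mul_right _)
      (((Int.gcd_dvd_right _ _).trans (Int.gcd_dvd_left _ _)).mul_right _)

theorem stmt_10 (q d : ℕ) (hq : 2 ≤ q) (hd : 2 ≤ d) (ψ θ x : ℤ) (hψ : ψ ≠ 0) :
    Tendsto
      (fun N : ℕ =>
        (((Finset.range N).filter fun n =>
            (ψ * wq q n + θ * n + x) % (d : ℤ) = 0).card : ℝ) / N)
      atTop
      (nhds (if Int.gcd ψ (Int.gcd θ (d : ℤ)) ∣ Int.gcd x (d : ℤ) then
        (Int.gcd ψ (Int.gcd θ (d : ℤ)) : ℝ) / d else 0)) :=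
  stmt_10_general q d hq hd ψ θ x
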